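/- Let G be a group with an automatic structure L ⊆ A* for π₁ : A* → G, and let φ be an endomorphism of G whose kernel Ker(φ) is finite. Then L is an automatic structure for the composite homomorphism π₁p : A* → G/Ker(φ), where p : G → G/Ker(φ) is the canonical projection; in particular, G/Ker(φ) is an automatic group. -/

import Mathlib

open scoped NNReal

namespace Auto

/-- The generating set `Aπ ∪ (Aπ)⁻¹` of `G` determined by `π : A* → G`. -/
def gens {A G : Type*} [Group G] (π : FreeMonoid A →* G) : Set G :=
  (Set.range fun a : A => π (FreeMonoid.of a)) ∪
    Set.range fun a : A => (π (FreeMonoid.of a))⁻¹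

/-- The word metric `d_A` on `G`: the least `n` such that `g⁻¹h` is a product of `n`
elements of `Aπ ∪ (Aπ)⁻¹`. -/
noncomputable def wdist {A G : Type*} [Group G] (π : FreeMonoid A →* G) (g h : G) : ℕ :=
  sInf {n : ℕ | ∃ l : List G, l.length = n ∧ (∀ x ∈ l, x ∈ gens π) ∧ l.prod = g⁻¹ * h}

/-- Evaluation of a word of `A*` in `G`. -/
def evalW {A G : Type*} [Group G] (π : FreeMonoid A →* G) (w : List A) : G :=
  π (FreeMonoid.ofList w)

/-- `u` and `v` `p`-fellow travel: `d_A(u^[n]π, v^[n]π) ≤ p` for all `n`. -/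
def FellowTravel {A G : Type*} [Group G] (π : FreeMonoid A →* G) (p : ℝ≥0)
    (u v : List A) : Prop :=
  ∀ n : ℕ, (wdist π (evalW π (u.take n)) (evalW π (v.take n)) : ℝ≥0) ≤ p

/-- `u` and `v` are `p`-meeting-fellow-travellers. -/
def MFT {A G : Type*} [Group G] (π : FreeMonoid A →* G) (p : ℝ≥0) (u v : List A) : Prop :=
  FellowTravel π p u v ∧ evalW π u = evalW π v

/-- A language is regular if it is accepted by a finite-state automaton. -/
def IsRegular {A : Type*} (L : Language A) : Prop :=
  ∃ (σ : Type) (_ : Fintype σ) (M : DFA A σ), M.accepts = L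

/-- `L` is an automatic structure for `π`. -/
structure IsAutomaticStructure {A G : Type*} [Group G] (π : FreeMonoid A →* G)
    (L : Language A) : Prop where
  regular : IsRegular L
  onto : ∀ g : G, ∃ w ∈ L, evalW π w = g
  ft : ∃ N : ℕ, ∀ u ∈ L, ∀ v ∈ L,
    wdist π (evalW π u) (evalW π v) ≤ 1 → FellowTravel π N u v

/-- Evaluation of an element of `A ∪ {ε}`. -/
def evalOpt {A G : Type*} [Group G] (π : FreeMonoid A →* G) : Option A → G
  | none => 1
  | some a => π (FreeMonoid.of a)

/-- `L` is a biautomatic structure for `π`. -/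
structure IsBiautomaticStructure {A G : Type*} [Group G] (π : FreeMonoid A →* G)
    (L : Language A) extends IsAutomaticStructure π L : Prop where
  bi : ∃ N : ℕ, ∀ u ∈ L, ∀ v ∈ L, ∀ a : Option A,
    evalW π v = evalOpt π a * evalW π u →
    ∀ n : ℕ, wdist π (evalOpt π a * evalW π (u.take n)) (evalW π (v.take n)) ≤ N

/-- A language is factorial if it is closed under taking factors. -/
def IsFactorial {A : Type*} (L : Language A) : Prop :=
  ∀ u ∈ L, ∀ v : List A, v <:+: u → v ∈ L

/-- `D : ℝ≥0 → ℝ≥0` is a departure function for `(G, L)`. -/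
def IsDepartureFunction {A G : Type*} [Group G] (π : FreeMonoid A →* G) (L : Language A)
    (D : ℝ≥0 → ℝ≥0) : Prop :=
  ∀ w ∈ L, ∀ r : ℝ≥0, ∀ s t : ℕ, D r ≤ (t : ℝ≥0) → s + t ≤ w.length →
    r < (wdist π (evalW π (w.take s)) (evalW π (w.take (s + t))) : ℝ≥0)

/-- Every point of `S` is within distance `N` of `T`. -/
def NbhdIn {A G : Type*} [Group G] (π : FreeMonoid A →* G) (N : ℕ) (S T : Set G) : Prop :=
  ∀ s ∈ S, ∃ t ∈ T, wdist π s t ≤ N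

/-- The Hausdorff distance between `S` and `T` is at most `N`. -/
def HausdorffLE {A G : Type*} [Group G] (π : FreeMonoid A →* G) (N : ℕ)
    (S T : Set G) : Prop :=
  NbhdIn π N S T ∧ NbhdIn π N T S

/-- `H` is an `L`-quasiconvex subgroup of `G`. -/
def IsQuasiconvex {A G : Type*} [Group G] (π : FreeMonoid A →* G) (L : Language A)
    (H : Subgroup G) : Prop :=
  ∃ k : ℕ, ∀ h ∈ H, ∀ h' ∈ H, ∀ w ∈ L, h * evalW π w = h' →
    ∀ n : ℕ, ∃ z ∈ H, wdist π (h * evalW π (w.take n)) z ≤ k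

/-- The bounded reduction property for `(φ, L, L')`. -/
def BRP {A B G G' : Type*} [Group G] [Group G'] (π : FreeMonoid A →* G)
    (π' : FreeMonoid B →* G') (φ : G →* G') (L : Language A) (L' : Language B) : Prop :=
  ∃ N : ℕ, ∀ x : G, ∀ α ∈ L, ∀ β ∈ L', evalW π' β = φ (evalW π α) →
    HausdorffLE π' N (Set.range fun n : ℕ => φ (x * evalW π (α.take n)))
      (Set.range fun n : ℕ => φ x * evalW π' (β.take n))

/-- The synchronous bounded reduction property for `(φ, L, L')`. -/
def SyncBRP {A B G G' : Type*} [Group G] [Group G'] (π : FreeMonoid A →* G)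
    (π' : FreeMonoid B →* G') (φ : G →* G') (L : Language A) (L' : Language B) : Prop :=
  ∃ N : ℕ, ∀ x : G, ∀ α ∈ L, ∀ β ∈ L', evalW π' β = φ (evalW π α) →
    ∀ n : ℕ, wdist π' (φ (x * evalW π (α.take n))) (φ x * evalW π' (β.take n)) ≤ N

/-- The fellow traveller bounded reduction property (FT-BRP) for `(φ, L, L')`. -/
def FTBRP {A B G G' : Type*} [Group G] [Group G'] (π : FreeMonoid A →* G)
    (π' : FreeMonoid B →* G') (φ : G →* G') (L : Language A) (L' : Language B) : Prop :=
  ∀ p : ℝ≥0, ∃ q : ℝ≥0,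
    ∀ u₁ ∈ L, ∀ u₂ ∈ L, ∀ u₃ ∈ L, ∀ u₁' ∈ L', ∀ u₂' ∈ L', ∀ u₃' ∈ L',
      evalW π' u₁' = φ (evalW π u₁) → evalW π' u₂' = φ (evalW π u₂) →
        evalW π' u₃' = φ (evalW π u₃) →
          MFT π p (u₁ ++ u₂) u₃ → MFT π' q (u₁' ++ u₂') u₃'

/-- The natural homomorphism `(A ⊔ B)* → G` agreeing with `π₁` on `A` and `π₂` on `B`. -/
def sumHom {A B G : Type*} [Group G] (π₁ : FreeMonoid A →* G) (π₂ : FreeMonoid B →* G) :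
    FreeMonoid (A ⊕ B) →* G :=
  FreeMonoid.lift (Sum.elim (fun a => π₁ (FreeMonoid.of a)) fun b => π₂ (FreeMonoid.of b))

/-- The union `L₁ ∪ L₂` viewed as a language over `A ⊔ B`. -/
def unionLang {A B : Type*} (L₁ : Language A) (L₂ : Language B) : Language (A ⊕ B) :=
  {w : List (A ⊕ B) | (∃ u ∈ L₁, w = u.map Sum.inl) ∨ ∃ v ∈ L₂, w = v.map Sum.inr}

/-- `L` is an asynchronous automatic structure for `π`. -/
def IsAsyncAutomaticStructure {A G : Type*} [Group G] (π : FreeMonoid A →* G)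
    (L : Language A) : Prop :=
  IsRegular L ∧ (∀ g : G, ∃ w ∈ L, evalW π w = g) ∧
    ∃ p : ℕ, ∀ u ∈ L, ∀ v ∈ L, wdist π (evalW π u) (evalW π v) ≤ 1 →
      ∃ φ ψ : ℕ → ℕ, Monotone φ ∧ Monotone ψ ∧
        Function.Surjective φ ∧ Function.Surjective ψ ∧
          ∀ t : ℕ, wdist π (evalW π (u.take (φ t))) (evalW π (v.take (ψ t))) ≤ p

/-- `L₁` and `L₂` are equivalent automatic structures. -/
def LangEquivalent {A B G : Type*} [Group G] (π₁ : FreeMonoid A →* G)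
    (π₂ : FreeMonoid B →* G) (L₁ : Language A) (L₂ : Language B) : Prop :=
  IsAsyncAutomaticStructure (sumHom π₁ π₂) (unionLang L₁ L₂)

/-- `L₁` and `L₂` are synchronously equivalent automatic structures. -/
def LangSyncEquivalent {A B G : Type*} [Group G] (π₁ : FreeMonoid A →* G)
    (π₂ : FreeMonoid B →* G) (L₁ : Language A) (L₂ : Language B) : Prop :=
  IsAutomaticStructure (sumHom π₁ π₂) (unionLang L₁ L₂)

/-- `L` has the Hausdorff closeness property. -/
def HausClose {A G : Type*} [Group G] (π : FreeMonoid A →* G) (L : Language A) : Prop :=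
  ∃ N : ℕ, ∀ u ∈ L, ∀ v ∈ L, wdist π (evalW π u) (evalW π v) ≤ 1 →
    HausdorffLE π N (Set.range fun n : ℕ => evalW π (u.take n))
      (Set.range fun n : ℕ => evalW π (v.take n))

/-- The padded alphabet `C = (A×B) ∪ (A×{$}) ∪ ({$}×B)` of convolution. -/
abbrev ConvAlphabet (A B : Type*) := (A × B) ⊕ (A ⊕ B)

/-- The convolution `u ⋄ v` of two words. -/
def conv {A B : Type*} : List A → List B → List (ConvAlphabet A B)
  | [], [] => []
  | [], b :: v => Sum.inr (Sum.inr b) :: conv [] v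
  | a :: u, [] => Sum.inr (Sum.inl a) :: conv u []
  | a :: u, b :: v => Sum.inl (a, b) :: conv u v
  termination_by u v => u.length + v.length

/-- The convolution `L₁ ⋄ L₂` of two languages. -/
def convLang {A B : Type*} (L₁ : Language A) (L₂ : Language B) :
    Language (ConvAlphabet A B) :=
  {w : List (ConvAlphabet A B) | ∃ u ∈ L₁, ∃ v ∈ L₂, w = conv u v}

/-- The natural homomorphism `C* → G × G'` for the convolution alphabet. -/
def convHom {A B G G' : Type*} [Group G] [Group G'] (π₁ : FreeMonoid A →* G)
    (π₂ : FreeMonoid B →* G') : FreeMonoid (ConvAlphabet A B) →* G × G' :=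
  FreeMonoid.lift fun c =>
    match c with
    | Sum.inl (a, b) => (π₁ (FreeMonoid.of a), π₂ (FreeMonoid.of b))
    | Sum.inr (Sum.inl a) => (π₁ (FreeMonoid.of a), 1)
    | Sum.inr (Sum.inr b) => (1, π₂ (FreeMonoid.of b))

/-- A group is automatic if it admits an automatic structure over some finite alphabet. -/
def IsAutomaticGroup (G : Type*) [Group G] : Prop :=
  ∃ (A : Type) (_ : Fintype A) (π : FreeMonoid A →* G) (L : Language A),
    IsAutomaticStructure π L

end Auto

open Auto

/-!
Since `Ker φ` is finite, its elements have word length at most some `C`. A word path of length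
at most one in `G/Ker φ` lifts to a path of length at most one in `G` ending in the same coset,
so points at distance `≤ 1` in the quotient are at distance `≤ C + 1` in `G`. Chaining the
fellow traveller property of `L` along a geodesic, words of `L` whose values are at distance
`≤ C + 1` in `G` fellow travel with constant `(C + 1) N`, and fellow travelling passes to the
quotient because the projection does not increase word distances.
-/

namespace Auto

section WordMetric

variable {A G H : Type*} [Group G] [Group H] {π : FreeMonoid A →* G}

theorem surjective_of_forall_exists_evalW_eq {L : Language A}
    (onto : ∀ g : G, ∃ w ∈ L, evalW π w = g) : Function.Surjective π := fun g =>
  let ⟨w, _, hw⟩ := onto g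
  ⟨FreeMonoid.ofList w, hw⟩

theorem wdist_le_length {g h : G} {l : List G} (hl : ∀ x ∈ l, x ∈ gens π)
    (hprod : l.prod = g⁻¹ * h) : wdist π g h ≤ l.length :=
  Nat.sInf_le ⟨l, rfl, hl, hprod⟩

theorem wdist_self (g : G) : wdist π g g = 0 :=
  Nat.le_zero.1 (wdist_le_length (l := []) (by simp) (by simp))

theorem wdist_mul_le_one {z : G} (hz : z ∈ gens π) (g : G) : wdist π g (g * z) ≤ 1 :=
  wdist_le_length (l := [z]) (by simpa using hz) (by simp)

theorem wdist_eq_wdist_one_inv_mul (g h : G) : wdist π g h = wdist π 1 (g⁻¹ * h) := by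
  simp [wdist]

theorem exists_list_gens_prod_eq (hπ : Function.Surjective π) (g : G) :
    ∃ l : List G, (∀ x ∈ l, x ∈ gens π) ∧ l.prod = g := by
  obtain ⟨w, rfl⟩ := hπ g
  refine ⟨w.toList.map (π ∘ FreeMonoid.of), ?_, ?_⟩
  · simp only [List.mem_map, Function.comp_apply]
    rintro _ ⟨a, -, rfl⟩
    exact Or.inl ⟨a, rfl⟩
  · rw [← FreeMonoid.lift_apply, FreeMonoid.lift_restrict]

theorem exists_list_length_eq_wdist (hπ : Function.Surjective π) (g h : G) :
    ∃ l : List G, l.length = wdist π g h ∧ (∀ x ∈ l, x ∈ gens π) ∧ l.prod = g⁻¹ * h := by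
  obtain ⟨l, hl, hprod⟩ := exists_list_gens_prod_eq hπ (g⁻¹ * h)
  exact Nat.sInf_mem (s := {n | ∃ l : List G, l.length = n ∧ (∀ x ∈ l, x ∈ gens π) ∧
    l.prod = g⁻¹ * h}) ⟨l.length, l, rfl, hl, hprod⟩

theorem wdist_triangle (hπ : Function.Surjective π) (g h k : G) :
    wdist π g k ≤ wdist π g h + wdist π h k := by
  obtain ⟨l₁, hlen₁, hl₁, hprod₁⟩ := exists_list_length_eq_wdist hπ g h
  obtain ⟨l₂, hlen₂, hl₂, hprod₂⟩ := exists_list_length_eq_wdist hπ h k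
  calc wdist π g k ≤ (l₁ ++ l₂).length :=
        wdist_le_length (by simpa [or_imp, forall_and] using And.intro hl₁ hl₂)
          (by rw [List.prod_append, hprod₁, hprod₂]; group)
    _ = wdist π g h + wdist π h k := by rw [List.length_append, hlen₁, hlen₂]

theorem exists_wdist_le_one_and_wdist_le (hπ : Function.Surjective π) {g h : G} {m : ℕ}
    (hd : wdist π g h ≤ m + 1) : ∃ k, wdist π g k ≤ 1 ∧ wdist π k h ≤ m := by
  obtain ⟨l, hlen, hl, hprod⟩ := exists_list_length_eq_wdist hπ g h
  cases l with
  | nil => exact ⟨h, by simp [← hlen], by simp [wdist_self]⟩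
  | cons x l =>
    refine ⟨g * x, wdist_mul_le_one (hl x List.mem_cons_self) g, ?_⟩
    have hprod' : l.prod = (g * x)⁻¹ * h := by
      rw [mul_inv_rev, mul_assoc, ← hprod, List.prod_cons, inv_mul_cancel_left]
    have := wdist_le_length (fun y hy => hl y (List.mem_cons_of_mem x hy)) hprod'
    simp only [List.length_cons] at hlen
    omega

theorem map_mem_gens_comp (p : G →* H) {x : G} (hx : x ∈ gens π) : p x ∈ gens (p.comp π) := by
  rcases hx with ⟨a, rfl⟩ | ⟨a, rfl⟩
  · exact Or.inl ⟨a, rfl⟩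
  · exact Or.inr ⟨a, by simp⟩

theorem exists_mem_gens_map_eq (p : G →* H) {x : H} (hx : x ∈ gens (p.comp π)) :
    ∃ z ∈ gens π, p z = x := by
  rcases hx with ⟨a, rfl⟩ | ⟨a, rfl⟩
  · exact ⟨_, Or.inl ⟨a, rfl⟩, rfl⟩
  · exact ⟨_, Or.inr ⟨a, rfl⟩, by simp⟩

theorem exists_list_gens_map_eq (p : G →* H) {l : List H} (hl : ∀ x ∈ l, x ∈ gens (p.comp π)) :
    ∃ l' : List G, (∀ z ∈ l', z ∈ gens π) ∧ l'.map p = l := by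
  induction l with
  | nil => exact ⟨[], by simp, rfl⟩
  | cons x l ih =>
    obtain ⟨z, hz, rfl⟩ := exists_mem_gens_map_eq p (hl x List.mem_cons_self)
    obtain ⟨l', hl', rfl⟩ := ih fun y hy => hl y (List.mem_cons_of_mem _ hy)
    exact ⟨z :: l', by simpa using And.intro hz hl', rfl⟩

theorem wdist_comp_le (hπ : Function.Surjective π) (p : G →* H) (g h : G) :
    wdist (p.comp π) (p g) (p h) ≤ wdist π g h := by
  obtain ⟨l, hlen, hl, hprod⟩ := exists_list_length_eq_wdist hπ g h
  calc wdist (p.comp π) (p g) (p h) ≤ (l.map p).length :=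
        wdist_le_length
          (by simpa only [List.forall_mem_map] using fun x hx => map_mem_gens_comp p (hl x hx))
          (by rw [← map_list_prod, hprod, map_mul, map_inv])
    _ = wdist π g h := by rw [List.length_map, hlen]

theorem exists_map_eq_wdist_le (p : G →* H) (hπp : Function.Surjective (p.comp π)) (g h : G) :
    ∃ h', p h' = p h ∧ wdist π g h' ≤ wdist (p.comp π) (p g) (p h) := by
  obtain ⟨l, hlen, hl, hprod⟩ := exists_list_length_eq_wdist hπp (p g) (p h)
  obtain ⟨l', hl', rfl⟩ := exists_list_gens_map_eq p hl
  refine ⟨g * l'.prod, ?_, ?_⟩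
  · rw [map_mul, map_list_prod, hprod, mul_inv_cancel_left]
  · rw [← hlen, List.length_map]
    exact wdist_le_length hl' (inv_mul_cancel_left g _).symm

end WordMetric

section AutomaticStructure

variable {A B G H : Type*} [Group G] [Group H] {π : FreeMonoid A →* G} {L : Language A}

theorem fellowTravel_natCast_iff {N : ℕ} {u v : List A} :
    FellowTravel π N u v ↔ ∀ n, wdist π (evalW π (u.take n)) (evalW π (v.take n)) ≤ N :=
  forall_congr' fun _ => Nat.cast_le

theorem FellowTravel.comp (hπ : Function.Surjective π) (p : G →* H) {N : ℝ≥0} {u v : List A}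
    (h : FellowTravel π N u v) : FellowTravel (p.comp π) N u v :=
  fun n => (Nat.cast_le.2 (wdist_comp_le hπ p _ _)).trans (h n)

theorem fellowTravel_of_wdist_le_succ (onto : ∀ g : G, ∃ w ∈ L, evalW π w = g) {N : ℕ}
    (hft : ∀ u ∈ L, ∀ v ∈ L, wdist π (evalW π u) (evalW π v) ≤ 1 → FellowTravel π N u v)
    (m : ℕ) {u v : List A} (hu : u ∈ L) (hv : v ∈ L)
    (hd : wdist π (evalW π u) (evalW π v) ≤ m + 1) :
    FellowTravel π ((m + 1) * N : ℕ) u v := by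
  have hπ := surjective_of_forall_exists_evalW_eq onto
  induction m generalizing u with
  | zero => simpa using hft u hu v hv hd
  | succ m ih =>
    obtain ⟨k, huk, hkv⟩ := exists_wdist_le_one_and_wdist_le hπ hd
    obtain ⟨w, hw, rfl⟩ := onto k
    have huw := fellowTravel_natCast_iff.1 (hft u hu w hw huk)
    have hwv := fellowTravel_natCast_iff.1 (ih hw hkv)
    refine fellowTravel_natCast_iff.2 fun n => ?_
    calc _ ≤ _ := wdist_triangle hπ _ (evalW π (w.take n)) _
      _ ≤ N + (m + 1) * N := add_le_add (huw n) (hwv n)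
      _ = (m + 1 + 1) * N := by ring

theorem wdist_le_of_wdist_comp_le_one (hπ : Function.Surjective π) (p : G →* H)
    (hp : Function.Surjective p) {C : ℕ} (hC : ∀ k ∈ p.ker, wdist π 1 k ≤ C) {g h : G}
    (hd : wdist (p.comp π) (p g) (p h) ≤ 1) : wdist π g h ≤ C + 1 := by
  obtain ⟨h', hph', hgh'⟩ := exists_map_eq_wdist_le p (hp.comp hπ) g h
  have hker : h'⁻¹ * h ∈ p.ker := by
    rw [MonoidHom.mem_ker, map_mul, map_inv, hph', inv_mul_cancel]
  calc wdist π g h ≤ wdist π g h' + wdist π h' h := wdist_triangle hπ g h' h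
    _ ≤ 1 + C :=
      add_le_add (hgh'.trans hd) ((wdist_eq_wdist_one_inv_mul h' h).trans_le (hC _ hker))
    _ = C + 1 := add_comm 1 C

theorem IsAutomaticStructure.comp_of_finite_ker (hL : IsAutomaticStructure π L) (p : G →* H)
    (hp : Function.Surjective p) (hker : (p.ker : Set G).Finite) :
    IsAutomaticStructure (p.comp π) L := by
  have hπ := surjective_of_forall_exists_evalW_eq hL.onto
  obtain ⟨N, hN⟩ := hL.ft
  obtain ⟨C, hC⟩ := (hker.image (wdist π 1)).bddAbove
  refine ⟨hL.regular, fun x => ?_, (C + 1) * N, fun u hu v hv hd => ?_⟩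
  · obtain ⟨g, rfl⟩ := hp x
    obtain ⟨w, hw, rfl⟩ := hL.onto g
    exact ⟨w, hw, rfl⟩
  · have hd' := wdist_le_of_wdist_comp_le_one hπ p hp (fun k hk => hC ⟨k, hk, rfl⟩) hd
    exact (fellowTravel_of_wdist_le_succ hL.onto hN C hu hv hd').comp hπ p

theorem IsRegular.preimage_map (h : IsRegular L) (f : B → A) :
    IsRegular (List.map f ⁻¹' L : Language B) :=
  let ⟨σ, hσ, M, hM⟩ := h
  ⟨σ, hσ, M.comap f, by rw [DFA.accepts_comap, hM]⟩

theorem evalW_comp_map (f : B → A) (w : List B) :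
    evalW (π.comp (FreeMonoid.map f)) w = evalW π (w.map f) := rfl

theorem gens_comp_map {f : B → A} (hf : Function.Surjective f) :
    gens (π.comp (FreeMonoid.map f)) = gens π :=
  congrArg₂ (· ∪ ·) (hf.range_comp fun a => π (FreeMonoid.of a))
    (hf.range_comp fun a => (π (FreeMonoid.of a))⁻¹)

theorem wdist_comp_map {f : B → A} (hf : Function.Surjective f) :
    wdist (π.comp (FreeMonoid.map f)) = wdist π := by
  unfold wdist
  rw [gens_comp_map hf]

theorem IsAutomaticStructure.comp_map (hL : IsAutomaticStructure π L) {f : B → A}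
    (hf : Function.Surjective f) :
    IsAutomaticStructure (π.comp (FreeMonoid.map f)) (List.map f ⁻¹' L) := by
  refine ⟨hL.regular.preimage_map f, fun g => ?_, ?_⟩
  · obtain ⟨w, hw, rfl⟩ := hL.onto g
    have hsec : (w.map (Function.surjInv hf)).map f = w := by
      rw [List.map_map, (Function.rightInverse_surjInv hf).comp_eq_id, List.map_id]
    exact ⟨w.map (Function.surjInv hf), by show _ ∈ L; rwa [hsec],
      by rw [evalW_comp_map, hsec]⟩
  · obtain ⟨N, hN⟩ := hL.ft
    refine ⟨N, fun u hu v hv hd n => ?_⟩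
    rw [wdist_comp_map hf] at hd ⊢
    simpa only [evalW_comp_map, List.map_take] using hN _ hu _ hv hd n

theorem IsAutomaticStructure.isAutomaticGroup [Finite A] (hL : IsAutomaticStructure π L) :
    IsAutomaticGroup G :=
  -- `IsAutomaticGroup` asks for an alphabet in `Type`, hence the reindexing along `Fin n`.
  let ⟨n, ⟨e⟩⟩ := Finite.exists_equiv_fin A
  ⟨Fin n, inferInstance, _, _, hL.comp_map e.symm.surjective⟩

end AutomaticStructure

end Auto

theorem quotient_automatic_general {A G : Type*} [Fintype A] [Group G]
    (π₁ : FreeMonoid A →* G)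
    (L : Language A) (hL : IsAutomaticStructure π₁ L)
    (φ : G →* G) (hker : (φ.ker : Set G).Finite) :
    IsAutomaticStructure ((QuotientGroup.mk' φ.ker).comp π₁) L ∧
      IsAutomaticGroup (G ⧸ φ.ker) := by
  have hLq := hL.comp_of_finite_ker (QuotientGroup.mk' φ.ker) (QuotientGroup.mk'_surjective _)
    (by rwa [QuotientGroup.ker_mk'])
  exact ⟨hLq, hLq.isAutomaticGroup⟩

/-- If `L` is an automatic structure for `π₁ : A* → G` and `φ` is an
endomorphism of `G` with finite kernel, then `L` is an automatic structure for the
composite `π₁p : A* → G/Ker(φ)`; in particular `G/Ker(φ)` is an automatic group. -/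
theorem quotient_automatic {A G : Type*} [Fintype A] [Group G]
    (π₁ : FreeMonoid A →* G) (hπ₁ : Function.Surjective π₁)
    (L : Language A) (hL : IsAutomaticStructure π₁ L)
    (φ : G →* G) (hker : (φ.ker : Set G).Finite) :
    IsAutomaticStructure ((QuotientGroup.mk' φ.ker).comp π₁) L ∧
      IsAutomaticGroup (G ⧸ φ.ker) :=
  quotient_automatic_general π₁ L hL φ hker
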